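/- Let Q, C : [0,T) → ℝ be differentiable with Q(0), C(0) > 0, satisfying Q'(t) ≥ c₀·C(t), Q'(t) ≤ C₀·C(t), and C'(t) ≥ c·Q(t)·C(t) with constants 0 < c₀ ≤ C₀ and c > 0. If C(0) ≥ κ·Q(0)² for some κ with 0 < κ < c/(4C₀), and Q remains positive, then C(t) ≥ κ·Q(t)² for all t ∈ [0,T). -/
import Mathlib


/-- Source-dominance persistence: under the comparison system
`Q' ≥ c₀ C`, `Q' ≤ C₀ C`, `C' ≥ c Q C`, with `0 < κ < c/(4C₀)` and
`C(0) ≥ κ Q(0)²`, the inequality `C ≥ κ Q²` persists on `[0,T)`. -/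
theorem source_dominance_persists
    (T c₀ C₀ c κ : ℝ) (hc₀ : 0 < c₀) (hc₀C₀ : c₀ ≤ C₀) (hc : 0 < c)
    (hκ0 : 0 < κ) (hκ : κ < c / (4 * C₀))
    (Q C Q' C' : ℝ → ℝ)
    (hQderiv : ∀ t ∈ Set.Ico (0:ℝ) T, HasDerivAt Q (Q' t) t)
    (hCderiv : ∀ t ∈ Set.Ico (0:ℝ) T, HasDerivAt C (C' t) t)
    (hQ0 : 0 < Q 0) (hC0 : 0 < C 0)
    (hQlow : ∀ t ∈ Set.Ico (0:ℝ) T, Q' t ≥ c₀ * C t)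
    (hQup : ∀ t ∈ Set.Ico (0:ℝ) T, Q' t ≤ C₀ * C t)
    (hCgrow : ∀ t ∈ Set.Ico (0:ℝ) T, C' t ≥ c * Q t * C t)
    (hQpos : ∀ t ∈ Set.Ico (0:ℝ) T, 0 < Q t)
    (hinit : C 0 ≥ κ * (Q 0)^2) :
    ∀ t ∈ Set.Ico (0:ℝ) T, C t ≥ κ * (Q t)^2 := by
  by_contra hcon
  push_neg at hcon
  obtain ⟨t₁, ht₁, hSneg⟩ := hcon
  have hC₀pos : 0 < C₀ := lt_of_lt_of_le hc₀ hc₀C₀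
  set S : ℝ → ℝ := fun t => C t - κ * Q t ^ 2 with hSdef
  have hS' : ∀ t ∈ Set.Ico (0:ℝ) T,
      HasDerivAt S (C' t - κ * ((2:ℕ) * Q t ^ 1 * Q' t)) t := fun t ht =>
    (hCderiv t ht).sub (((hQderiv t ht).pow 2).const_mul κ)
  set B := {s : ℝ | s ∈ Set.Icc 0 t₁ ∧ 0 ≤ S s} with hBdef
  have h0B : (0:ℝ) ∈ B := ⟨⟨le_refl 0, ht₁.1⟩, by simp [hSdef]; linarith [hinit]⟩
  have hBbdd : BddAbove B := ⟨t₁, fun s hs => hs.1.2⟩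
  set t₀ := sSup B with ht₀def
  have ht₀mem : 0 ≤ t₀ := le_csSup hBbdd h0B
  have ht₀le : t₀ ≤ t₁ := csSup_le ⟨0, h0B⟩ fun s hs => hs.1.2
  have ht₀Ico : t₀ ∈ Set.Ico 0 T := ⟨ht₀mem, lt_of_le_of_lt ht₀le ht₁.2⟩
  have hScont : ContinuousAt S t₀ := (hS' t₀ ht₀Ico).continuousAt
  -- S t₀ ≥ 0
  have hclos : t₀ ∈ closure B := csSup_mem_closure ⟨0, h0B⟩ hBbdd
  have hNB : Filter.NeBot (nhdsWithin t₀ B) := mem_closure_iff_nhdsWithin_neBot.mp hclos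
  haveI := hNB
  have hSt₀ : 0 ≤ S t₀ := by
    refine ge_of_tendsto ((hScont.continuousWithinAt : ContinuousWithinAt S B t₀).tendsto) ?_
    filter_upwards [self_mem_nhdsWithin] with s hs
    exact hs.2
  have hSt₁neg : S t₁ < 0 := by simp [hSdef]; linarith [hSneg]
  have ht₀lt : t₀ < t₁ := by
    rcases eq_or_lt_of_le ht₀le with h | h
    · rw [h] at hSt₀; linarith
    · exact h
  -- In both cases we get: eventually on 𝓝[>] t₀, 0 < S
  have hev : ∀ᶠ s in nhdsWithin t₀ (Set.Ioi t₀), 0 < S s := by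
    rcases eq_or_lt_of_le hSt₀ with h0 | hpos
    · -- S t₀ = 0, use derivative
      have hCt₀ : C t₀ = κ * Q t₀ ^ 2 := by
        have := h0.symm; simp [hSdef] at this; linarith
      have hQt₀ : 0 < Q t₀ := hQpos t₀ ht₀Ico
      have hCt₀pos : 0 < C t₀ := by rw [hCt₀]; positivity
      have hs'pos : 0 < C' t₀ - κ * ((2:ℕ) * Q t₀ ^ 1 * Q' t₀) := by
        have h1 := hCgrow t₀ ht₀Ico
        have h2 := hQup t₀ ht₀Ico
        have h3 : 4 * C₀ * κ < c := by
          rw [lt_div_iff₀ (by positivity)] at hκ; linarith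
        have hqq : Q' t₀ ≤ C₀ * C t₀ := h2
        push_cast
        nlinarith [mul_pos hQt₀ hCt₀pos, mul_le_mul_of_nonneg_left hqq
          (by positivity : (0:ℝ) ≤ 2 * κ * Q t₀)]
      have hslope := hasDerivAt_iff_tendsto_slope.mp (hS' t₀ ht₀Ico)
      have hev' : ∀ᶠ x in nhdsWithin t₀ {t₀}ᶜ, 0 < slope S t₀ x :=
        hslope.eventually (eventually_gt_nhds hs'pos)
      have hev'' : ∀ᶠ x in nhdsWithin t₀ (Set.Ioi t₀), 0 < slope S t₀ x :=
        hev'.filter_mono (nhdsWithin_mono t₀ fun x hx => ne_of_gt hx)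
      filter_upwards [hev'', self_mem_nhdsWithin] with x hx hx'
      have hxgt : t₀ < x := hx'
      have : 0 < (S x - S t₀) / (x - t₀) := by
        simpa [slope_def_field, div_eq_iff] using hx
      have hpos' : 0 < S x - S t₀ := by
        have := mul_pos this (sub_pos.mpr hxgt)
        rwa [div_mul_cancel₀] at this
        exact ne_of_gt (sub_pos.mpr hxgt)
      have hz : S t₀ = 0 := h0.symm
      linarith
    · -- S t₀ > 0, use continuity
      have : ∀ᶠ s in nhds t₀, 0 < S s := continuousAt_const.eventually_lt hScont hpos
      exact this.filter_mono nhdsWithin_le_nhds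
  have hle : ∀ᶠ s in nhdsWithin t₀ (Set.Ioi t₀), s ≤ t₁ := by
    filter_upwards [Ioo_mem_nhdsGT_of_mem (Set.mem_Ico.mpr ⟨le_refl t₀, ht₀lt⟩)] with s hs
    exact le_of_lt hs.2
  have : ∀ᶠ s in nhdsWithin t₀ (Set.Ioi t₀), False := by
    filter_upwards [hev, hle, self_mem_nhdsWithin] with s hs hs' hs''
    have hsB : s ∈ B := ⟨⟨le_trans ht₀mem (le_of_lt hs''), hs'⟩, le_of_lt hs⟩
    exact absurd (le_csSup hBbdd hsB) (not_le.mpr hs'')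
  exact this.exists.elim fun _ h => h
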